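/- arXiv:2508.19362 — 5 statements merged into one kernel-verified Lean document; each statement's English description precedes it below -/
import Mathlib

section
/- Let X be a length space and let 0 ≤ k₀ < k be integers. Suppose that for each i ∈ {k₀, k₀+1, …, k} there is a non-empty collection ℱᵢ of topological embeddings of the standard i-dimensional simplex Δᵢ into X × X such that: (b) for every F ∈ ℱᵢ, every geodesic G with π_GX(G) ∈ F(relint(Δᵢ)) extends to a GMPR on F(Δᵢ), i.e., there exists a GMPR σ on F(Δᵢ) with σ(π_GX(G)) = G; and (c) for every i with k₀ ≤ i < k, every F ∈ ℱᵢ, and every GMPR Γ on F(Δᵢ), there exists F′ ∈ ℱ_{i+1} such that (i) F is the restriction of F′ to a face of Δ_{i+1}, (ii) the set of geodesics Γ(F(Δᵢ)) is disjoint from the closure in GX of π_GX⁻¹(F′(relint(Δ_{i+1}))), and (iii) there are only finitely many GMPRs on F′(Δ_{i+1}). Then X × X cannot be partitioned into k − k₀ locally compact subsets each of which admits a GMPR; in particular the geodesic complexity of X is at least k − k₀. -/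
/-- A geodesic in a metric space: a continuous path `γ : [0,1] → X` moving at
constant speed `c` and realizing distances, i.e. `d(γ s, γ t) = c·|s − t|`. -/
def IsGeodesic {X : Type*} [PseudoMetricSpace X] (γ : C(unitInterval, X)) : Prop :=
  ∃ c : ℝ, ∀ s t : unitInterval, dist (γ s) (γ t) = c * |(s : ℝ) - (t : ℝ)|

/-- A geodesic motion planning rule (GMPR) on `E ⊆ X × X`: a map, continuous
on `E`, sending each pair `(x, y) ∈ E` to a geodesic from `x` to `y`.
(The space of geodesics `GX` is topologized as a subspace of `C([0,1], X)`
with the supremum metric.) -/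
def IsGMPROn {X : Type*} [PseudoMetricSpace X] (E : Set (X × X))
    (σ' : X × X → C(unitInterval, X)) : Prop :=
  ContinuousOn σ' E ∧ ∀ e ∈ E, IsGeodesic (σ' e) ∧ σ' e 0 = e.1 ∧ σ' e 1 = e.2

/-- A length space: the distance between two points is the infimum of the
lengths (total variations) of continuous paths joining them. -/
def IsLengthSpace (X : Type*) [PseudoMetricSpace X] : Prop :=
  ∀ x y : X, edist x y =
    ⨅ (γ : C(unitInterval, X)) (_ : γ 0 = x ∧ γ 1 = y), eVariationOn (⇑γ) Set.univ

/-- The relative interior of the standard simplex `Δ = stdSimplex ℝ ι`: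
points with all barycentric coordinates strictly positive. -/
def relintStdSimplex (ι : Type*) [Fintype ι] : Set (ι → ℝ) :=
  {x | (∀ i, 0 < x i) ∧ ∑ i, x i = 1}

open Set Topology Filter

lemma relint_subset_stdSimplex {ι : Type*} [Fintype ι] :
    relintStdSimplex ι ⊆ stdSimplex ℝ ι :=
  fun _ hx => ⟨fun i => (hx.1 i).le, hx.2⟩

lemma barycenter_mem_relint (m : ℕ) :
    (fun _ : Fin (m + 1) => (1 : ℝ) / (m + 1)) ∈ relintStdSimplex (Fin (m + 1)) := by
  constructor
  · intro i; positivity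
  · rw [Finset.sum_const, Finset.card_univ, Fintype.card_fin, nsmul_eq_mul]
    have : ((m : ℝ) + 1) ≠ 0 := by positivity
    push_cast
    field_simp

lemma insertNth_mem_stdSimplex {m : ℕ} (j : Fin (m + 2)) {x : Fin (m + 1) → ℝ}
    (hx : x ∈ stdSimplex ℝ (Fin (m + 1))) :
    j.insertNth 0 x ∈ stdSimplex ℝ (Fin (m + 2)) := by
  constructor
  · intro q
    by_cases hq : q = j
    · subst hq; rw [Fin.insertNth_apply_same]
    · obtain ⟨i, rfl⟩ := Fin.exists_succAbove_eq hq
      rw [Fin.insertNth_apply_succAbove]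
      exact hx.1 i
  · rw [Fin.sum_univ_succAbove _ j, Fin.insertNth_apply_same]
    simp only [Fin.insertNth_apply_succAbove]
    rw [hx.2, zero_add]

lemma mem_closure_image_relint {Y : Type*} [TopologicalSpace Y] {m : ℕ}
    {F : (Fin (m + 1) → ℝ) → Y} (hF : ContinuousOn F (stdSimplex ℝ (Fin (m + 1))))
    {y : Fin (m + 1) → ℝ} (hy : y ∈ stdSimplex ℝ (Fin (m + 1))) :
    F y ∈ closure (F '' relintStdSimplex (Fin (m + 1))) := by
  set b : Fin (m + 1) → ℝ := fun _ => 1 / (m + 1) with hb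
  have hbmem := barycenter_mem_relint m
  set u : ℕ → (Fin (m + 1) → ℝ) :=
    fun n q => (1 - 1 / (n + 1)) * y q + (1 / (n + 1)) * b q with hu
  have hεpos : ∀ n : ℕ, (0 : ℝ) < 1 / (n + 1) := by intro n; positivity
  have hε1 : ∀ n : ℕ, (1 : ℝ) / (n + 1) ≤ 1 := by
    intro n
    rw [div_le_one (by positivity)]
    linarith [Nat.cast_nonneg (α := ℝ) n]
  have hmem : ∀ n, u n ∈ relintStdSimplex (Fin (m + 1)) := by
    intro n
    constructor
    · intro q
      have h1 : (0:ℝ) ≤ (1 - 1 / (n + 1)) * y q :=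
        mul_nonneg (by linarith [hε1 n]) (hy.1 q)
      have h2 : (0:ℝ) < (1 / (n + 1)) * b q := mul_pos (hεpos n) (hbmem.1 q)
      exact add_pos_of_nonneg_of_pos h1 h2
    · simp only [hu]
      rw [Finset.sum_add_distrib, ← Finset.mul_sum, ← Finset.mul_sum, hy.2, hbmem.2]
      ring
  have h0 : Tendsto (fun n : ℕ => (1 : ℝ) / (n + 1)) atTop (𝓝 0) :=
    tendsto_one_div_add_atTop_nhds_zero_nat
  have htend : Tendsto u atTop (𝓝 y) := by
    rw [tendsto_pi_nhds]
    intro q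
    have : Tendsto (fun n : ℕ => (1 - 1 / (n + 1 : ℝ)) * y q + (1 / (n + 1 : ℝ)) * b q)
        atTop (𝓝 ((1 - 0) * y q + 0 * b q)) :=
      ((tendsto_const_nhds.sub h0).mul tendsto_const_nhds).add (h0.mul tendsto_const_nhds)
    simpa [hu] using this
  have htend' : Tendsto u atTop (𝓝[stdSimplex ℝ (Fin (m + 1))] y) :=
    tendsto_nhdsWithin_of_tendsto_nhds_of_eventually_within _ htend
      (Eventually.of_forall fun n => relint_subset_stdSimplex (hmem n))
  have hFt : Tendsto (fun n => F (u n)) atTop (𝓝 (F y)) :=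
    (hF y hy).tendsto.comp htend'
  exact mem_closure_of_tendsto hFt
    (Eventually.of_forall fun n => mem_image_of_mem _ (hmem n))

lemma locally_closed_of_locallyCompact {Z : Type*} [MetricSpace Z] {E : Set Z}
    (hLC : LocallyCompactSpace E) {p : Z} (hp : p ∈ E) :
    ∃ U : Set Z, IsOpen U ∧ p ∈ U ∧ closure E ∩ U ⊆ E := by
  obtain ⟨K, hKnhds, -, hKcomp⟩ :=
    local_compact_nhds (X := E) (x := ⟨p, hp⟩) (n := univ) univ_mem
  rw [mem_nhds_subtype] at hKnhds
  obtain ⟨t, ht_nhds, ht_sub⟩ := hKnhds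
  refine ⟨interior t, isOpen_interior, mem_interior_iff_mem_nhds.2 ht_nhds, ?_⟩
  intro z hz
  have hsub : E ∩ interior t ⊆ Subtype.val '' K := by
    rintro w ⟨hwE, hwt⟩
    have hwt' : w ∈ t := interior_subset hwt
    exact ⟨⟨w, hwE⟩, ht_sub hwt', rfl⟩
  have hKcl : IsClosed (Subtype.val '' K) :=
    (hKcomp.image continuous_subtype_val).isClosed
  have : z ∈ closure (E ∩ interior t) := by
    have := isOpen_interior.inter_closure (t := E) ⟨hz.2, hz.1⟩
    rwa [inter_comm] at this
  have : z ∈ Subtype.val '' K := hKcl.closure_subset (closure_mono hsub this)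
  obtain ⟨⟨w, hw⟩, -, rfl⟩ := this
  exact hw

/-- **Lower bound for geodesic complexity via embedded simplices.**
Let `X` be a length space and `0 ≤ k₀ < k`.  Suppose for each `k₀ ≤ i ≤ k`
there is a nonempty collection `ℱ i` of topological embeddings of the standard
`i`-simplex into `X × X` such that:
(b) every geodesic whose endpoint pair lies in the image of the relative
interior of the simplex under `F ∈ ℱ i` extends to a GMPR on the whole image
of `F`; and
(c) for `k₀ ≤ i < k`, each `F ∈ ℱ i` and each GMPR `Γ` on the image of `F`,
there is `F' ∈ ℱ (i+1)` such that (i) `F` is the restriction of `F'` to a face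
of `Δ_{i+1}`, (ii) the geodesics chosen by `Γ` on the image of `F` avoid the
closure of the set of geodesics with endpoints in the image of the relative
interior of `F'`, and (iii) there are only finitely many GMPRs on the image
of `F'`.
Then `X × X` admits no partition into `k − k₀` locally compact subsets each of
which carries a GMPR (hence `GC(X) ≥ k − k₀`). -/
theorem geodesic_complexity_lower_bound_of_simplices
    {X : Type*} [MetricSpace X] (hX : IsLengthSpace X)
    (k₀ k : ℕ) (hk : k₀ < k)
    (ℱ : (i : ℕ) → Set ((Fin (i + 1) → ℝ) → X × X))
    (hne : ∀ i, k₀ ≤ i → i ≤ k → (ℱ i).Nonempty)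
    (hemb : ∀ i, k₀ ≤ i → i ≤ k → ∀ F ∈ ℱ i,
      Topology.IsEmbedding ((stdSimplex ℝ (Fin (i + 1))).restrict F))
    (hb : ∀ i, k₀ ≤ i → i ≤ k → ∀ F ∈ ℱ i, ∀ G : C(unitInterval, X),
      IsGeodesic G → (G 0, G 1) ∈ F '' relintStdSimplex (Fin (i + 1)) →
      ∃ σ', IsGMPROn (F '' stdSimplex ℝ (Fin (i + 1))) σ' ∧ σ' (G 0, G 1) = G)
    (hc : ∀ i, k₀ ≤ i → i < k → ∀ F ∈ ℱ i,
      ∀ σ', IsGMPROn (F '' stdSimplex ℝ (Fin (i + 1))) σ' →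
      ∃ F' ∈ ℱ (i + 1),
        (∃ j : Fin (i + 2), ∀ x ∈ stdSimplex ℝ (Fin (i + 1)),
          F x = F' (j.insertNth 0 x)) ∧
        (σ' '' (F '' stdSimplex ℝ (Fin (i + 1)))) ∩
          closure {G : C(unitInterval, X) | IsGeodesic G ∧
            (G 0, G 1) ∈ F' '' relintStdSimplex (Fin (i + 2))} = ∅ ∧
        {g : (F' '' stdSimplex ℝ (Fin (i + 2))) → C(unitInterval, X) |
          ∃ τ, IsGMPROn (F' '' stdSimplex ℝ (Fin (i + 2))) τ ∧
            g = (F' '' stdSimplex ℝ (Fin (i + 2))).restrict τ}.Finite) :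
    ¬ ∃ E : Fin (k - k₀) → Set (X × X),
        (∀ z : X × X, ∃! j, z ∈ E j) ∧
        (∀ j, LocallyCompactSpace (E j)) ∧
        (∀ j, ∃ σ', IsGMPROn (E j) σ') := by
  rintro ⟨E, hcover, hlc, hσex⟩
  choose σ hσ using hσex
  have key : ∀ t, t ≤ k - k₀ → ∃ F, F ∈ ℱ (k₀ + t) ∧
      ∃ (J : Finset (Fin (k - k₀))) (p : X × X),
        J.card = t ∧ p ∈ F '' relintStdSimplex (Fin (k₀ + t + 1)) ∧
        ∀ m ∈ J, p ∉ closure (E m) := by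
    intro t
    induction t with
    | zero =>
      intro _
      obtain ⟨F, hF⟩ := hne k₀ le_rfl hk.le
      exact ⟨F, hF, ∅, F (fun _ => 1 / (k₀ + 1)),
        rfl, mem_image_of_mem _ (barycenter_mem_relint k₀), by simp⟩
    | succ t ih =>
      intro ht
      obtain ⟨F, hF, J, p, hJcard, hp_rel, hJav⟩ := ih (Nat.le_of_succ_le ht)
      have hik : k₀ + t < k := by omega
      have hk₀i : k₀ ≤ k₀ + t := Nat.le_add_right _ _
      obtain ⟨j, hpEj⟩ := (hcover p).exists
      have hjJ : j ∉ J := fun hm => hJav j hm (subset_closure hpEj)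
      obtain ⟨hσcont, hσgeo⟩ := hσ j
      obtain ⟨hgeo, h0, h1⟩ := hσgeo p hpEj
      have hend : (σ j p 0, σ j p 1) = p := by rw [h0, h1]
      obtain ⟨Γ, hΓ, hΓp⟩ := hb (k₀ + t) hk₀i hik.le F hF (σ j p) hgeo (by rw [hend]; exact hp_rel)
      rw [hend] at hΓp
      obtain ⟨F', hF', ⟨j', hface⟩, hdisj, -⟩ := hc (k₀ + t) hk₀i hik F hF Γ hΓ
      obtain ⟨x, hx_rel, hpx⟩ := hp_rel
      have hxΔ : x ∈ stdSimplex ℝ (Fin (k₀ + t + 1)) := relint_subset_stdSimplex hx_rel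
      have hpΔ' : p ∈ F' '' stdSimplex ℝ (Fin (k₀ + t + 2)) :=
        ⟨j'.insertNth 0 x, insertNth_mem_stdSimplex j' hxΔ, by rw [← hface x hxΔ, hpx]⟩
      have hF'cont : ContinuousOn F' (stdSimplex ℝ (Fin (k₀ + t + 2))) := by
        rw [continuousOn_iff_continuous_restrict]
        exact (hemb (k₀ + t + 1) (by omega) (by omega) F' hF').continuous
      have hpcl : p ∈ closure (F' '' relintStdSimplex (Fin (k₀ + t + 2))) := by
        obtain ⟨y, hyΔ, hyp⟩ := hpΔ'
        rw [← hyp]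
        exact mem_closure_image_relint hF'cont hyΔ
      have hS : σ j '' (E j ∩ F' '' relintStdSimplex (Fin (k₀ + t + 2))) ⊆
          {G : C(unitInterval, X) | IsGeodesic G ∧
            (G 0, G 1) ∈ F' '' relintStdSimplex (Fin (k₀ + t + 2))} := by
        rintro - ⟨q, ⟨hqE, hq_rel⟩, rfl⟩
        obtain ⟨hgq, hq0, hq1⟩ := hσgeo q hqE
        exact ⟨hgq, by rw [hq0, hq1]; exact hq_rel⟩
      have hnotcl : p ∉ closure (E j ∩ F' '' relintStdSimplex (Fin (k₀ + t + 2))) := by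
        intro hclmem
        have hc1 : σ j p ∈
            closure (σ j '' (E j ∩ F' '' relintStdSimplex (Fin (k₀ + t + 2)))) :=
          ((hσcont p hpEj).mono inter_subset_left).mem_closure_image hclmem
        have hc2 : Γ p ∈ closure {G : C(unitInterval, X) | IsGeodesic G ∧
            (G 0, G 1) ∈ F' '' relintStdSimplex (Fin (k₀ + t + 2))} := by
          rw [hΓp]
          exact closure_mono hS hc1
        have : Γ p ∈ (Γ '' (F '' stdSimplex ℝ (Fin (k₀ + t + 1)))) ∩
            closure {G : C(unitInterval, X) | IsGeodesic G ∧
              (G 0, G 1) ∈ F' '' relintStdSimplex (Fin (k₀ + t + 2))} :=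
          ⟨mem_image_of_mem Γ ⟨x, hxΔ, hpx⟩, hc2⟩
        rw [hdisj] at this
        exact this
      obtain ⟨U, hUopen, hpU, hUsub⟩ := locally_closed_of_locallyCompact (hlc j) hpEj
      set V := (closure (E j ∩ F' '' relintStdSimplex (Fin (k₀ + t + 2))))ᶜ ∩ U ∩
        ⋂ m ∈ J, (closure (E m))ᶜ with hV
      have hVopen : IsOpen V :=
        ((isClosed_closure.isOpen_compl).inter hUopen).inter
          (isOpen_biInter_finset fun m _ => isClosed_closure.isOpen_compl)
      have hpV : p ∈ V :=
        ⟨⟨hnotcl, hpU⟩, mem_iInter₂.2 fun m hm => hJav m hm⟩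
      obtain ⟨p', hp'V, hp'rel⟩ :=
        mem_closure_iff_nhds.1 hpcl _ (hVopen.mem_nhds hpV)
      obtain ⟨⟨hp'ncl, hp'U⟩, hp'J⟩ := hp'V
      have hp'nEj : p' ∉ E j := fun hmem => hp'ncl (subset_closure ⟨hmem, hp'rel⟩)
      have hp'nclEj : p' ∉ closure (E j) := fun hcle => hp'nEj (hUsub ⟨hcle, hp'U⟩)
      refine ⟨F', hF', insert j J, p', ?_, hp'rel, ?_⟩
      · rw [Finset.card_insert_of_notMem hjJ, hJcard]
      · intro m hm
        rcases Finset.mem_insert.1 hm with rfl | hm'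
        · exact hp'nclEj
        · exact mem_iInter₂.1 hp'J m hm'
  obtain ⟨F, hF, J, p, hJcard, hp_rel, hJav⟩ := key (k - k₀) le_rfl
  obtain ⟨j, hpEj⟩ := (hcover p).exists
  have hJuniv : J = Finset.univ := Finset.eq_univ_of_card J (by simp [hJcard])
  exact hJav j (hJuniv ▸ Finset.mem_univ j) (subset_closure hpEj)
end

section
/- Let Z be a topological space, Y a subset of a Euclidean space, and k, k′ > 0 integers. Suppose p : T_k → Z is a topological embedding and q : T_k → Y^{k′} is a continuous map such that for every t ∈ T_k ∖ S_k the k′ points q(t)₁, …, q(t)_{k′} are affinely independent and their convex hull is contained in Y, while for every t ∈ S_k one has q(t) = (y_t, …, y_t) for some y_t ∈ Y. Then there exists a topological embedding f : Δ_{k+k′−1} → Z × Y such that for every t ∈ T_k and every x ∈ D_{t,k′}, the first coordinate of f(x) equals p(t), and the image of D_{t,k′} under the second coordinate of f equals the convex hull of the points q(t)₁, …, q(t)_{k′}. -/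
/-- `T k = {r ∈ ℝ^k : Σᵢ rᵢ ≤ 1, rᵢ ≥ 0}`, a realization of the standard
`k`-dimensional simplex `Δ_k`. -/
def simplexT (k : ℕ) : Set (Fin k → ℝ) :=
  {r | (∀ i, 0 ≤ r i) ∧ ∑ i, r i ≤ 1}

/-- `S k = {r ∈ T k : Σᵢ rᵢ = 1}`, the face of `T k` where the coordinates sum
to one. -/
def simplexS (k : ℕ) : Set (Fin k → ℝ) :=
  {r | (∀ i, 0 ≤ r i) ∧ ∑ i, r i = 1}

/-! Write `k' = K + 1` and a point of `T_{k+K}` as `x = (t, s)` with `t ∈ ℝ^k`, `s ∈ ℝ^K`. For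
`∑ t < 1` the slice `D_{t,k'}` is a `K`-simplex in which `x` has barycentric coordinates
`(1 - ∑ x, s) / (1 - ∑ t)`; the embedding is `x ↦ (p t, ∑ⱼ wⱼ(x) • q(t)ⱼ)` with these weights `w`.
It is continuous away from `∑ t = 1`, and at `∑ t = 1` too, because there all `q(t)ⱼ` coincide and
convex combinations of points tending to a single point tend to it, whatever the weights. It is
injective because `p` recovers `t` and affine independence of the `q(t)ⱼ` recovers the weights.
A continuous injection of the compact `T_{k+K}` into the Hausdorff space `T_k × ℝ^m` is an
embedding, and composing with the embedding `p × id` gives the result. -/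

open Set Filter Topology Finset

theorem sum_smul_const_of_mem_stdSimplex {ι E : Type*} [Fintype ι] [AddCommGroup E] [Module ℝ E]
    {w : ι → ℝ} (hw : w ∈ stdSimplex ℝ ι) (y : E) : ∑ i, w i • y = y := by
  rw [← sum_smul, hw.2, one_smul]

theorem convexHull_range_eq_image_stdSimplex {ι E : Type*} [Fintype ι] [AddCommGroup E]
    [Module ℝ E] (v : ι → E) :
    convexHull ℝ (range v) = (fun w => ∑ i, w i • v i) '' stdSimplex ℝ ι := by
  classical
  have hL : (fun w : ι → ℝ => ∑ i, w i • v i) = Fintype.linearCombination ℝ v := rfl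
  rw [← convexHull_rangle_single_eq_stdSimplex, hL, LinearMap.image_convexHull, ← range_comp]
  simp only [Function.comp_def, Fintype.linearCombination_apply_single, one_smul]

theorem AffineIndependent.eq_of_sum_smul_eq {ι E : Type*} [Fintype ι] [AddCommGroup E]
    [Module ℝ E] {v : ι → E} (hv : AffineIndependent ℝ v) {w w' : ι → ℝ}
    (hw : ∑ i, w i = 1) (hw' : ∑ i, w' i = 1) (h : ∑ i, w i • v i = ∑ i, w' i • v i) :
    w = w' := by
  refine (affineIndependent_iff_eq_of_fintype_affineCombination_eq ℝ v).1 hv w w' hw hw' ?_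
  rwa [univ.affineCombination_eq_linear_combination v w hw,
    univ.affineCombination_eq_linear_combination v w' hw']

theorem tendsto_sum_smul_of_mem_stdSimplex {X ι E : Type*} [Fintype ι]
    [SeminormedAddCommGroup E] [NormedSpace ℝ E] {l : Filter X} {w : X → ι → ℝ}
    {v : X → ι → E} {y : E} (hw : ∀ᶠ x in l, w x ∈ stdSimplex ℝ ι)
    (hv : ∀ i, Tendsto (fun x => v x i) l (𝓝 y)) :
    Tendsto (fun x => ∑ i, w x i • v x i) l (𝓝 y) := by
  have hdist : Tendsto (fun x => ∑ i, ‖v x i - y‖) l (𝓝 0) := by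
    simpa using tendsto_finsetSum univ fun i _ => ((hv i).sub_const y).norm
  refine tendsto_iff_norm_sub_tendsto_zero.2 <| squeeze_zero' (.of_forall fun _ => norm_nonneg _)
    (hw.mono fun x hx => ?_) hdist
  have hsub : ∑ i, w x i • v x i - y = ∑ i, w x i • (v x i - y) := by
    simp only [smul_sub, sum_sub_distrib, sum_smul_const_of_mem_stdSimplex hx]
  calc ‖∑ i, w x i • v x i - y‖ = ‖∑ i, w x i • (v x i - y)‖ := by rw [hsub]
    _ ≤ ∑ i, ‖w x i • (v x i - y)‖ := norm_sum_le _ _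
    _ ≤ ∑ i, ‖v x i - y‖ := by
      gcongr with i
      obtain ⟨h0, h1⟩ := mem_Icc_of_mem_stdSimplex hx i
      rw [norm_smul, Real.norm_of_nonneg h0]
      exact mul_le_of_le_one_left (norm_nonneg _) h1

theorem isEmbedding_domRestrict_prodMk {X A Z F : Type*} [TopologicalSpace X]
    [TopologicalSpace A] [T2Space A] [TopologicalSpace Z] [TopologicalSpace F] [T2Space F]
    {s : Set X} {t : Set A} (hs : IsCompact s) {p : A → Z} (hp : IsEmbedding (t.domRestrict p))
    {h : X → A} (hh : ContinuousOn h s) (hst : MapsTo h s t) {g : X → F}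
    (hg : ContinuousOn g s) (hinj : InjOn (fun x => (h x, g x)) s) :
    IsEmbedding (s.domRestrict fun x => (p (h x), g x)) := by
  have : CompactSpace s := isCompact_iff_compactSpace.1 hs
  let G : s → t × F := fun x => (⟨h x, hst x.2⟩, g x)
  have hG : IsEmbedding G := by
    refine (Continuous.isClosedEmbedding ?_ fun x y hxy => ?_).isEmbedding
    · exact ((continuousOn_iff_continuous_domRestrict.1 hh).subtype_mk _).prodMk
        (continuousOn_iff_continuous_domRestrict.1 hg)
    · exact Subtype.ext <| hinj x.2 y.2 <| Prod.ext (congrArg (·.1.1) hxy) (congrArg (·.2) hxy)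
  exact (hp.prodMap .id).comp hG

theorem isCompact_simplexT (k : ℕ) : IsCompact (simplexT k) := by
  have hclosed : IsClosed (simplexT k) := by
    have : simplexT k = (⋂ i, {r : Fin k → ℝ | 0 ≤ r i}) ∩ {r | ∑ i, r i ≤ 1} := by
      ext r; simp [simplexT]
    rw [this]
    exact (isClosed_iInter fun i => isClosed_le continuous_const (continuous_apply i)).inter
      (isClosed_le (by fun_prop) continuous_const)
  refine (isCompact_Icc (a := 0) (b := 1)).of_isClosed_subset hclosed
    fun r hr => ⟨hr.1, fun i => ?_⟩
  calc r i ≤ ∑ j, r j := single_le_sum (fun j _ => hr.1 j) (mem_univ i)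
    _ ≤ 1 := hr.2

namespace SimplexFiber

variable {k K : ℕ}

def head (x : Fin (k + K) → ℝ) : Fin k → ℝ := fun j => x (Fin.castAdd K j)

def tail (x : Fin (k + K) → ℝ) : Fin K → ℝ := fun i => x (Fin.natAdd k i)

/-- Barycentric coordinates of `x` in the slice over `head x`, whose vertices are `(head x, 0)`
and `(head x, (1 - ∑ head x) • eᵢ)`; over `S_k` the slice is a single point, which is given the
weights `Pi.single 0 1`. -/
noncomputable def weights (x : Fin (k + K) → ℝ) : Fin (K + 1) → ℝ :=
  if ∑ j, head x j = 1 then Pi.single 0 1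
  else (1 - ∑ j, head x j)⁻¹ • Fin.cons (1 - ∑ i, x i) (tail x)

def point (t : Fin k → ℝ) (ω : Fin (K + 1) → ℝ) : Fin (k + K) → ℝ :=
  Fin.append t ((1 - ∑ j, t j) • Fin.tail ω)

theorem sum_eq_sum_head_add_sum_tail (x : Fin (k + K) → ℝ) :
    ∑ i, x i = ∑ j, head x j + ∑ i, tail x i :=
  Fin.sum_univ_add x

theorem head_mem_simplexT {x : Fin (k + K) → ℝ} (hx : x ∈ simplexT (k + K)) :
    head x ∈ simplexT k := by
  refine ⟨fun j => hx.1 _, ?_⟩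
  have : 0 ≤ ∑ i, tail x i := sum_nonneg fun i _ => hx.1 _
  linarith [hx.2, sum_eq_sum_head_add_sum_tail x]

theorem tail_eq_zero_of_sum_head_eq_one {x : Fin (k + K) → ℝ} (hx : x ∈ simplexT (k + K))
    (h : ∑ j, head x j = 1) : tail x = 0 := by
  have hnonneg : ∀ i ∈ Finset.univ, 0 ≤ tail x i := fun i _ => hx.1 _
  have hsum : ∑ i, tail x i = 0 :=
    le_antisymm (by linarith [hx.2, sum_eq_sum_head_add_sum_tail x]) (sum_nonneg hnonneg)
  funext i
  exact (sum_eq_zero_iff_of_nonneg hnonneg).1 hsum i (mem_univ i)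

theorem weights_mem_stdSimplex {x : Fin (k + K) → ℝ} (hx : x ∈ simplexT (k + K)) :
    weights x ∈ stdSimplex ℝ (Fin (K + 1)) := by
  unfold weights
  split_ifs with h
  · exact single_mem_stdSimplex ℝ 0
  have hpos : 0 < 1 - ∑ j, head x j := sub_pos.2 <| (head_mem_simplexT hx).2.lt_of_ne h
  refine ⟨fun j => mul_nonneg (inv_nonneg.2 hpos.le) ?_, ?_⟩
  · refine Fin.cases ?_ (fun i => ?_) j
    · simpa using hx.2
    · simpa [tail] using hx.1 _
  · simp only [Pi.smul_apply, smul_eq_mul, ← mul_sum, Fin.sum_cons,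
      sum_eq_sum_head_add_sum_tail x]
    field_simp
    ring

theorem head_point (t : Fin k → ℝ) (ω : Fin (K + 1) → ℝ) : head (point t ω) = t := by
  funext j
  simp [head, point]

theorem tail_point (t : Fin k → ℝ) (ω : Fin (K + 1) → ℝ) :
    tail (point t ω) = (1 - ∑ j, t j) • Fin.tail ω := by
  funext i
  simp [tail, point]

theorem point_mem_simplexT {t : Fin k → ℝ} (ht : t ∈ simplexT k) {ω : Fin (K + 1) → ℝ}
    (hω : ω ∈ stdSimplex ℝ (Fin (K + 1))) : point t ω ∈ simplexT (k + K) := by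
  have hs : 0 ≤ 1 - ∑ j, t j := sub_nonneg.2 ht.2
  refine ⟨fun i => ?_, ?_⟩
  · refine Fin.addCases (fun j => ?_) (fun i => ?_) i
    · simpa [point] using ht.1 j
    · simpa [point, Fin.tail] using mul_nonneg hs (hω.1 _)
  · have h1 := hω.2
    rw [Fin.sum_univ_succ] at h1
    rw [sum_eq_sum_head_add_sum_tail, head_point, tail_point]
    simp only [Pi.smul_apply, smul_eq_mul, ← mul_sum, Fin.tail]
    nlinarith [hω.1 0]

theorem weights_point {t : Fin k → ℝ} (ht : ∑ j, t j ≠ 1) {ω : Fin (K + 1) → ℝ}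
    (hω : ∑ j, ω j = 1) : weights (point t ω) = ω := by
  have hs : 1 - ∑ j, t j ≠ 0 := sub_ne_zero.2 (Ne.symm ht)
  rw [Fin.sum_univ_succ] at hω
  have hlast : 1 - ∑ i, point t ω i = (1 - ∑ j, t j) * ω 0 := by
    rw [sum_eq_sum_head_add_sum_tail, head_point, tail_point]
    simp only [Pi.smul_apply, smul_eq_mul, ← mul_sum, Fin.tail]
    linear_combination -(1 - ∑ j, t j) * hω
  funext j
  simp only [weights, head_point, if_neg ht, Pi.smul_apply, smul_eq_mul]
  refine Fin.cases ?_ (fun i => ?_) j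
  · rw [Fin.cons_zero, hlast]; field_simp
  · rw [Fin.cons_succ, tail_point]; simp only [Pi.smul_apply, smul_eq_mul, Fin.tail]
    field_simp

theorem point_head_weights {x : Fin (k + K) → ℝ} (hx : x ∈ simplexT (k + K)) :
    point (head x) (weights x) = x := by
  suffices (1 - ∑ j, head x j) • Fin.tail (weights x) = tail x from
    (congrArg (Fin.append (head x)) this).trans Fin.append_castAdd_natAdd
  by_cases h : ∑ j, head x j = 1
  · rw [h, sub_self, zero_smul, tail_eq_zero_of_sum_head_eq_one hx h]
  · have hs : 1 - ∑ j, head x j ≠ 0 := sub_ne_zero.2 (Ne.symm h)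
    funext i
    simp only [weights, if_neg h, Pi.smul_apply, smul_eq_mul, Fin.tail, Fin.cons_succ]
    field_simp

@[fun_prop]
theorem continuous_head : Continuous (head (k := k) (K := K)) :=
  continuous_pi fun _ => continuous_apply _

theorem continuousOn_weights :
    ContinuousOn (weights (k := k) (K := K)) {x | ∑ j, head x j ≠ 1} := by
  have hhead : Continuous fun x : Fin (k + K) → ℝ => ∑ j, head x j := by fun_prop
  refine ContinuousOn.congr (f := fun x => (1 - ∑ j, head x j)⁻¹ •
    (Fin.cons (1 - ∑ i, x i) (tail x) : Fin (K + 1) → ℝ)) ?_ fun x hx => if_neg hx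
  refine ((continuous_const.sub hhead).continuousOn.inv₀ fun x hx => ?_).smul ?_
  · exact sub_ne_zero.2 (Ne.symm hx)
  · refine Continuous.continuousOn (continuous_pi fun j => ?_)
    refine Fin.cases ?_ (fun i => ?_) j
    · simp only [Fin.cons_zero]; fun_prop
    · simp only [Fin.cons_succ, tail]; fun_prop

section Module

variable {E : Type*} [AddCommGroup E] [Module ℝ E]

noncomputable def map (q : (Fin k → ℝ) → Fin (K + 1) → E) (x : Fin (k + K) → ℝ) : E :=
  ∑ j, weights x j • q (head x) j

theorem map_mem_convexHull (q : (Fin k → ℝ) → Fin (K + 1) → E) {x : Fin (k + K) → ℝ}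
    (hx : x ∈ simplexT (k + K)) : map q x ∈ convexHull ℝ (range (q (head x))) := by
  rw [convexHull_range_eq_image_stdSimplex]
  exact ⟨_, weights_mem_stdSimplex hx, rfl⟩

theorem map_eq_of_forall_eq {q : (Fin k → ℝ) → Fin (K + 1) → E} {x : Fin (k + K) → ℝ}
    (hx : x ∈ simplexT (k + K)) {y : E} (hy : ∀ j, q (head x) j = y) : map q x = y := by
  simp only [map, hy, sum_smul_const_of_mem_stdSimplex (weights_mem_stdSimplex hx)]

theorem image_map {q : (Fin k → ℝ) → Fin (K + 1) → E} {t : Fin k → ℝ} (ht : t ∈ simplexT k)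
    (hq : t ∈ simplexS k → ∃ y, ∀ j, q t j = y) :
    map q '' {x ∈ simplexT (k + K) | head x = t} = convexHull ℝ (range (q t)) := by
  refine Subset.antisymm ?_ ?_
  · rintro _ ⟨x, ⟨hx, rfl⟩, rfl⟩
    exact map_mem_convexHull q hx
  rw [convexHull_range_eq_image_stdSimplex]
  rintro _ ⟨ω, hω, rfl⟩
  have hmem := point_mem_simplexT ht hω
  refine ⟨point t ω, ⟨hmem, head_point t ω⟩, ?_⟩
  by_cases h : ∑ j, t j = 1
  · obtain ⟨y, hy⟩ := hq ⟨ht.1, h⟩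
    rw [map_eq_of_forall_eq hmem (by rwa [head_point])]
    simp only [hy, sum_smul_const_of_mem_stdSimplex hω]
  · simp only [map, head_point, weights_point h hω.2]

theorem eq_of_map_eq {q : (Fin k → ℝ) → Fin (K + 1) → E} {x x' : Fin (k + K) → ℝ}
    (hx : x ∈ simplexT (k + K)) (hx' : x' ∈ simplexT (k + K)) (hhead : head x = head x')
    (hq : head x ∉ simplexS k → AffineIndependent ℝ (q (head x)))
    (h : map q x = map q x') : x = x' := by
  have hw : weights x = weights x' := by
    by_cases hs : ∑ j, head x j = 1
    · simp only [weights, ← hhead, if_pos hs]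
    · refine (hq (hs ·.2)).eq_of_sum_smul_eq (weights_mem_stdSimplex hx).2
        (weights_mem_stdSimplex hx').2 ?_
      rwa [map, map, ← hhead] at h
  rw [← point_head_weights hx, ← point_head_weights hx', hhead, hw]

end Module

theorem continuousOn_map {E : Type*} [NormedAddCommGroup E] [NormedSpace ℝ E]
    {q : (Fin k → ℝ) → Fin (K + 1) → E} (hq : ContinuousOn q (simplexT k))
    (hdiag : ∀ t ∈ simplexS k, ∃ y, ∀ j, q t j = y) :
    ContinuousOn (map q) (simplexT (k + K)) := by
  have hqh : ContinuousOn (fun x => q (head x)) (simplexT (k + K)) :=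
    hq.comp continuous_head.continuousOn fun _ => head_mem_simplexT
  intro x₀ hx₀
  by_cases h : ∑ j, head x₀ j = 1
  · obtain ⟨y, hy⟩ := hdiag _ ⟨(head_mem_simplexT hx₀).1, h⟩
    rw [ContinuousWithinAt, map_eq_of_forall_eq hx₀ hy]
    refine tendsto_sum_smul_of_mem_stdSimplex
      (eventually_nhdsWithin_of_forall fun _ => weights_mem_stdSimplex) fun j => ?_
    exact hy j ▸ (continuous_apply j).continuousAt.comp_continuousWithinAt (hqh x₀ hx₀)
  · have hU : {x | ∑ j, head x j ≠ 1} ∈ 𝓝 x₀ :=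
      (isClosed_eq (by fun_prop) continuous_const).isOpen_compl.mem_nhds h
    refine (continuousWithinAt_inter hU).1 ?_
    refine continuousOn_finsetSum _ (fun j _ => ?_) x₀ ⟨hx₀, h⟩
    exact (continuousOn_pi.1 continuousOn_weights j |>.mono inter_subset_right).smul
      ((continuous_apply j).comp_continuousOn (hqh.mono inter_subset_left))

end SimplexFiber

open SimplexFiber in
/-- **Embeddings of simplices into products (Lemma on nice embeddings).**
Given a topological space `Z`, a subset `Y` of a Euclidean space `ℝ^m`,
integers `k, k' > 0`, a topological embedding `p : T_k → Z` and a continuous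
map `q : T_k → Y^{k'}` such that for `t ∈ T_k ∖ S_k` the points
`q(t)₁, …, q(t)_{k'}` are affinely independent with convex hull inside `Y`,
while for `t ∈ S_k` all the `q(t)ⱼ` coincide in a single point of `Y`,
there is a topological embedding `f : Δ_{k+k'−1} → Z × Y` such that on each
slice `D_{t,k'} = {x ∈ Δ_{k+k'−1} : (x₁,…,x_k) = t}` the first coordinate of
`f` is constantly `p t` and the second coordinate maps `D_{t,k'}` onto the
convex hull of `q(t)₁, …, q(t)_{k'}`. -/
theorem exists_simplex_embedding_into_product
    {Z : Type*} [TopologicalSpace Z] {m : ℕ} (Y : Set (Fin m → ℝ))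
    (k k' : ℕ) (hk' : 0 < k')
    (p : (Fin k → ℝ) → Z)
    (hp : Topology.IsEmbedding ((simplexT k).restrict p))
    (q : (Fin k → ℝ) → Fin k' → (Fin m → ℝ))
    (hq_cont : ContinuousOn q (simplexT k))
    (hq_ind : ∀ t ∈ simplexT k \ simplexS k,
      AffineIndependent ℝ (q t) ∧ convexHull ℝ (Set.range (q t)) ⊆ Y)
    (hq_diag : ∀ t ∈ simplexS k, ∃ y ∈ Y, ∀ j, q t j = y) :
    ∃ f : (Fin (k + k' - 1) → ℝ) → Z × (Fin m → ℝ),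
      Topology.IsEmbedding ((simplexT (k + k' - 1)).restrict f) ∧
      (∀ x ∈ simplexT (k + k' - 1), (f x).2 ∈ Y) ∧
      ∀ t ∈ simplexT k,
        (∀ x ∈ simplexT (k + k' - 1),
          (∀ j : Fin k, x (Fin.castLE (by omega) j) = t j) → (f x).1 = p t) ∧
        (fun x => (f x).2) ''
            {x ∈ simplexT (k + k' - 1) |
              ∀ j : Fin k, x (Fin.castLE (by omega) j) = t j} =
          convexHull ℝ (Set.range (q t)) := by
  obtain ⟨K, rfl⟩ : ∃ K, k' = K + 1 := ⟨k' - 1, by omega⟩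
  have hconst : ∀ t ∈ simplexS k, ∃ y, ∀ j, q t j = y := fun t ht =>
    (hq_diag t ht).imp fun _ => And.right
  have hhullY : ∀ t ∈ simplexT k, convexHull ℝ (range (q t)) ⊆ Y := by
    intro t ht
    by_cases hS : t ∈ simplexS k
    · obtain ⟨y, hy, hqy⟩ := hq_diag t hS
      rw [show q t = fun _ => y from funext hqy, range_const, convexHull_singleton]
      exact singleton_subset_iff.2 hy
    · exact (hq_ind t ⟨ht, hS⟩).2
  refine ⟨fun x => (p (head x), map q x), ?_, fun x hx => hhullY _ (head_mem_simplexT hx)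
    (map_mem_convexHull q hx), fun t ht => ⟨fun x _ hxt => congrArg p (funext hxt), ?_⟩⟩
  · refine isEmbedding_domRestrict_prodMk (isCompact_simplexT _) hp continuous_head.continuousOn
      (fun _ => head_mem_simplexT) (continuousOn_map hq_cont hconst) fun x hx x' hx' hxx' => ?_
    obtain ⟨hhead, hmap⟩ := Prod.ext_iff.1 hxx'
    exact eq_of_map_eq hx hx' hhead (fun hS => (hq_ind _ ⟨head_mem_simplexT hx, hS⟩).1) hmap
  · have hslice := image_map (K := K) ht (hconst t)
    simp only [funext_iff, head] at hslice
    exact hslice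
end

section
/- Let Tⁿ be the flat n-torus (n ≥ 1). Then Tⁿ × Tⁿ cannot be partitioned into n locally compact subsets each of which admits a GMPR; equivalently, the geodesic complexity of Tⁿ is at least n. -/
/-- The integer lattice `ℤⁿ` inside Euclidean space `ℝⁿ`. -/
noncomputable def intLattice (n : ℕ) : AddSubgroup (EuclideanSpace ℝ (Fin n)) where
  carrier := {x | ∀ i, ∃ m : ℤ, x i = m}
  zero_mem' := fun i => ⟨0, by simp⟩
  add_mem' := by
    intro a b ha hb i
    obtain ⟨m, hm⟩ := ha i
    obtain ⟨l, hl⟩ := hb i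
    exact ⟨m + l, by push_cast [PiLp.add_apply, hm, hl]; ring⟩
  neg_mem' := by
    intro a ha i
    obtain ⟨m, hm⟩ := ha i
    exact ⟨-m, by push_cast [PiLp.neg_apply, hm]; ring⟩

instance intLattice_isClosed (n : ℕ) :
    IsClosed ((intLattice n : AddSubgroup (EuclideanSpace ℝ (Fin n))) :
      Set (EuclideanSpace ℝ (Fin n))) := by
  have : ((intLattice n : AddSubgroup (EuclideanSpace ℝ (Fin n))) :
      Set (EuclideanSpace ℝ (Fin n))) =
      ⋂ i, (fun x : EuclideanSpace ℝ (Fin n) => x i) ⁻¹'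
        (Set.range ((↑) : ℤ → ℝ)) := by
    ext x
    simp [intLattice, Set.mem_iInter, eq_comm]
  rw [this]
  exact isClosed_iInter fun i =>
    Int.isClosedEmbedding_coe_real.isClosed_range.preimage
      (EuclideanSpace.proj i).continuous

/-- The flat `n`-torus `ℝⁿ/ℤⁿ`, equipped with the quotient metric induced by
the Euclidean metric on `ℝⁿ`. -/
abbrev FlatTorus (n : ℕ) := EuclideanSpace ℝ (Fin n) ⧸ intLattice n

open Metric

section QuotientNorm

variable {E : Type*} [NormedAddCommGroup E] {S : AddSubgroup E}

theorem QuotientAddGroup.exists_mk_eq_norm_eq [ProperSpace E] [hS : IsClosed (S : Set E)]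
    (x : E ⧸ S) : ∃ v : E, (v : E ⧸ S) = x ∧ ‖v‖ = ‖x‖ := by
  obtain ⟨a, rfl⟩ := QuotientAddGroup.mk_surjective x
  obtain ⟨m, hmS, hm⟩ := hS.exists_infDist_eq_dist ⟨0, S.zero_mem⟩ a
  refine ⟨a - m, ?_, ?_⟩
  · rw [QuotientAddGroup.eq_iff_sub_mem, sub_sub_cancel_left]
    exact S.neg_mem hmS
  · rw [QuotientAddGroup.norm_mk, hm, dist_eq_norm]

/- Shortest representatives of `m` and `x - m` add up to a representative of `x` of length `‖x‖`;
equality in the triangle inequality forces them to coincide. -/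
theorem QuotientAddGroup.exists_mk_smul_half_eq [NormedSpace ℝ E] [StrictConvexSpace ℝ E]
    [ProperSpace E] [IsClosed (S : Set E)] {x m : E ⧸ S}
    (h₀ : dist 0 m = ‖x‖ / 2) (h₁ : dist m x = ‖x‖ / 2) :
    ∃ v : E, (v : E ⧸ S) = x ∧ ‖v‖ = ‖x‖ ∧ (((2 : ℝ)⁻¹ • v : E) : E ⧸ S) = m := by
  obtain ⟨u, hum, hu⟩ := exists_mk_eq_norm_eq m
  obtain ⟨w, hwm, hw⟩ := exists_mk_eq_norm_eq (x - m)
  rw [dist_zero_left] at h₀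
  rw [dist_comm, dist_eq_norm] at h₁
  have hsum : ((u + w : E) : E ⧸ S) = x := by
    rw [QuotientAddGroup.mk_add, hum, hwm, add_sub_cancel]
  have hnorms : ‖u‖ + ‖w‖ = ‖x‖ := by rw [hu, hw, h₀, h₁]; ring
  have hadd : ‖u + w‖ = ‖u‖ + ‖w‖ :=
    (norm_add_le u w).antisymm (hnorms ▸ hsum ▸ QuotientAddGroup.norm_mk_le_norm)
  have huw : u = w := eq_of_norm_eq_of_norm_add_eq (by rw [hu, hw, h₀, h₁]) hadd
  subst huw
  refine ⟨u + u, hsum, hadd.trans hnorms, ?_⟩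
  rw [← two_smul ℝ u, smul_smul, inv_mul_cancel₀ two_ne_zero, one_smul, hum]

end QuotientNorm

theorem EuclideanSpace.norm_lt_norm_of_abs_le_of_abs_lt {ι : Type*} [Fintype ι]
    {x y : EuclideanSpace ℝ ι} (h : ∀ i, |x i| ≤ |y i|) {i : ι} (hi : |x i| < |y i|) :
    ‖x‖ < ‖y‖ := by
  rw [← pow_lt_pow_iff_left₀ (norm_nonneg x) (norm_nonneg y) two_ne_zero,
    EuclideanSpace.real_norm_sq_eq, EuclideanSpace.real_norm_sq_eq]
  exact Finset.sum_lt_sum (fun j _ => sq_le_sq.2 (h j)) ⟨i, Finset.mem_univ i, sq_lt_sq.2 hi⟩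

theorem abs_le_abs_sub_intCast {x : ℝ} (hx : |x| ≤ 1 / 2) (m : ℤ) : |x| ≤ |x - m| := by
  rcases eq_or_ne m 0 with rfl | hm
  · simp
  have h1 : (1 : ℝ) ≤ |(m : ℝ)| := by exact_mod_cast Int.one_le_abs hm
  have h2 := abs_sub_abs_le_abs_sub (m : ℝ) x
  rw [abs_sub_comm] at h2
  linarith

theorem eq_of_sub_eq_intCast {a b : ℝ} (ha : |a| ≤ 1 / 2) (hb : |b| < 1 / 2) {m : ℤ}
    (h : a - b = m) : a = b := by
  have hm : |(m : ℝ)| < 1 := by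
    rw [← h]
    linarith [abs_sub a b]
  have : m = 0 := Int.abs_lt_one_iff.1 (by exact_mod_cast hm)
  rw [this, Int.cast_zero, sub_eq_zero] at h
  exact h

/- `a` and `b` are `k`-th coordinates of shortest representatives of `p` and `y`, with
`y k = 1/2 + t`; `b` wraps around to `t - a`. -/
theorem three_eighths_le_abs_sub_intCast {a b t : ℝ} (ha : |a| = 1 / 2) (hat : 0 < a * t)
    (ht : |t| < 1 / 4) (hb : |b| ≤ 1 / 2) (hbt : ∃ m : ℤ, b - (1 / 2 + t) = m) (m : ℤ) :
    3 / 8 ≤ |b / 2 - a / 2 - m| := by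
  obtain ⟨m₁, hm₁⟩ := hbt
  obtain ⟨ht₁, ht₂⟩ := abs_lt.1 ht
  rcases (abs_eq (by norm_num : (0 : ℝ) ≤ 1 / 2)).1 ha with rfl | rfl
  · have hb' : b = t - 1 / 2 :=
      eq_of_sub_eq_intCast hb (by rw [abs_lt]; constructor <;> linarith) (m := m₁ + 1)
        (by push_cast; linarith)
    calc 3 / 8 ≤ |b / 2 - 1 / 2 / 2| := by rw [hb', abs_of_neg (by linarith)]; linarith
      _ ≤ _ := abs_le_abs_sub_intCast (by rw [hb', abs_le]; constructor <;> linarith) m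
  · have hb' : b = t + 1 / 2 :=
      eq_of_sub_eq_intCast hb (by rw [abs_lt]; constructor <;> linarith) (m := m₁)
        (by linarith)
    calc 3 / 8 ≤ |b / 2 - -(1 / 2) / 2| := by rw [hb', abs_of_pos (by linarith)]; linarith
      _ ≤ _ := abs_le_abs_sub_intCast (by rw [hb', abs_le]; constructor <;> linarith) m

namespace FlatTorus

variable {n : ℕ}

theorem mk_eq_mk_iff {x y : EuclideanSpace ℝ (Fin n)} :
    (x : FlatTorus n) = y ↔ ∀ i, ∃ m : ℤ, x i - y i = m := by
  rw [QuotientAddGroup.eq_iff_sub_mem]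
  rfl

theorem abs_apply_le_half_of_norm_eq {v : EuclideanSpace ℝ (Fin n)}
    (hv : ‖v‖ = ‖(v : FlatTorus n)‖) (i : Fin n) : |v i| ≤ 1 / 2 := by
  by_contra! hi
  set r : EuclideanSpace ℝ (Fin n) := v - WithLp.toLp 2 fun j => (round (v j) : ℝ)
  have hr : ∀ j, r j = v j - round (v j) := fun j => rfl
  have hrv : (r : FlatTorus n) = v :=
    mk_eq_mk_iff.2 fun j => ⟨-round (v j), by rw [hr]; push_cast; ring⟩
  have hlt : ‖r‖ < ‖v‖ :=
    EuclideanSpace.norm_lt_norm_of_abs_le_of_abs_lt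
      (fun j => by simpa [hr] using round_le (v j) 0) ((hr i ▸ abs_sub_round (v i)).trans_lt hi)
  have hle : ‖(v : FlatTorus n)‖ ≤ ‖r‖ := hrv ▸ QuotientAddGroup.norm_mk_le_norm
  linarith

theorem exists_intCast_abs_sub_le_dist (a b : EuclideanSpace ℝ (Fin n)) (k : Fin n) :
    ∃ m : ℤ, |a k - b k - m| ≤ dist (a : FlatTorus n) b := by
  obtain ⟨r, hr, hrn⟩ := QuotientAddGroup.exists_mk_eq_norm_eq ((a - b : _) : FlatTorus n)
  obtain ⟨m, hm⟩ := mk_eq_mk_iff.1 hr k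
  refine ⟨-m, ?_⟩
  rw [dist_eq_norm, ← QuotientAddGroup.mk_sub, ← hrn]
  calc |a k - b k - ((-m : ℤ) : ℝ)| = |r k| := by
        rw [PiLp.sub_apply] at hm; push_cast; congr 1; linarith
    _ ≤ ‖r‖ := PiLp.norm_apply_le r k

theorem abs_apply_eq_half_of_norm_eq {v p : EuclideanSpace ℝ (Fin n)}
    (hvp : (v : FlatTorus n) = p) (hvn : ‖v‖ = ‖(p : FlatTorus n)‖) {k : Fin n}
    (hpk : p k = 1 / 2) : |v k| = 1 / 2 := by
  refine (abs_apply_le_half_of_norm_eq (hvp ▸ hvn) k).antisymm (not_lt.1 fun hlt => ?_)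
  obtain ⟨m, hm⟩ := mk_eq_mk_iff.1 hvp k
  have hp_abs : |p k| = 1 / 2 := by rw [hpk, abs_of_pos one_half_pos]
  have hpv : p k = v k := eq_of_sub_eq_intCast hp_abs.le hlt (m := -m) (by push_cast; linarith)
  exact hlt.ne (hpv ▸ hp_abs)

end FlatTorus

noncomputable def unitInterval.half : unitInterval := ⟨1 / 2, by norm_num, by norm_num⟩

theorem IsGeodesic.dist_apply_eq {X : Type*} [PseudoMetricSpace X] {γ : C(unitInterval, X)}
    (hγ : IsGeodesic γ) (t : unitInterval) :
    dist (γ 0) (γ t) = t * dist (γ 0) (γ 1) ∧ dist (γ t) (γ 1) = (1 - t) * dist (γ 0) (γ 1) := by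
  obtain ⟨c, hc⟩ := hγ
  have ht₀ : (0 : ℝ) ≤ t := t.2.1
  have ht₁ : (t : ℝ) ≤ 1 := t.2.2
  simp only [hc, Set.Icc.coe_zero, Set.Icc.coe_one, zero_sub, abs_neg, abs_one, mul_one,
    abs_of_nonneg ht₀, abs_of_nonpos (sub_nonpos.2 ht₁)]
  constructor <;> ring

theorem IsGMPROn.exists_mk_smul_half_eq {E : Type*} [NormedAddCommGroup E] [NormedSpace ℝ E]
    [StrictConvexSpace ℝ E] [ProperSpace E] {S : AddSubgroup E} [IsClosed (S : Set E)]
    {D : Set ((E ⧸ S) × (E ⧸ S))} {σ' : (E ⧸ S) × (E ⧸ S) → C(unitInterval, E ⧸ S)}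
    (hσ : IsGMPROn D σ') {x : E ⧸ S} (hx : (0, x) ∈ D) :
    ∃ v : E, (v : E ⧸ S) = x ∧ ‖v‖ = ‖x‖ ∧
      (((2 : ℝ)⁻¹ • v : E) : E ⧸ S) = σ' (0, x) unitInterval.half := by
  obtain ⟨hgeod, h₀, h₁⟩ := hσ.2 _ hx
  obtain ⟨hd₀, hd₁⟩ := hgeod.dist_apply_eq unitInterval.half
  have hhalf : ((unitInterval.half : unitInterval) : ℝ) = 1 / 2 := rfl
  have hx₀ : dist (0 : E ⧸ S) x = ‖x‖ := dist_zero_left x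
  rw [h₀, h₁, hhalf, hx₀] at hd₀ hd₁
  exact QuotientAddGroup.exists_mk_smul_half_eq (by rw [hd₀]; ring) (by rw [hd₁]; ring)

def MissesOneSideNear {ι : Type*} [Fintype ι] (F : Set (EuclideanSpace ℝ ι))
    (p : EuclideanSpace ℝ ι) (k : ι) (a : ℝ) : Prop :=
  ∃ δ > 0, ∃ s : ℝ, |s| = 1 ∧ ∀ y ∈ ball p δ, 0 < s * (y k - a) → y ∉ F

theorem IsGMPROn.missesOneSideNear {n : ℕ} {D : Set (FlatTorus n × FlatTorus n)}
    {σ' : FlatTorus n × FlatTorus n → C(unitInterval, FlatTorus n)} (hσ : IsGMPROn D σ')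
    {p : EuclideanSpace ℝ (Fin n)} (hp : (0, (p : FlatTorus n)) ∈ D) {k : Fin n}
    (hpk : p k = 1 / 2) :
    MissesOneSideNear {y | (0, (y : FlatTorus n)) ∈ D} p k (1 / 2) := by
  obtain ⟨δ, hδ, hcont⟩ := Metric.continuousOn_iff.1 hσ.1 _ hp (1 / 8) (by norm_num)
  obtain ⟨v, hvp, hvn, hv⟩ := hσ.exists_mk_smul_half_eq hp
  have hvk : |v k| = 1 / 2 := FlatTorus.abs_apply_eq_half_of_norm_eq hvp hvn hpk
  refine ⟨min δ (1 / 4), by positivity, 2 * v k, by rw [abs_mul, hvk]; norm_num, ?_⟩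
  rintro y hy hside (hyD : (0, (y : FlatTorus n)) ∈ D)
  obtain ⟨w, hwy, hwn, hw⟩ := hσ.exists_mk_smul_half_eq hyD
  have hyp : dist y p < min δ (1 / 4) := hy
  have hfar :
      3 / 8 ≤ dist (((2 : ℝ)⁻¹ • w : _) : FlatTorus n) (((2 : ℝ)⁻¹ • v : _) : FlatTorus n) := by
    obtain ⟨m, hm⟩ := FlatTorus.exists_intCast_abs_sub_le_dist ((2 : ℝ)⁻¹ • w) ((2 : ℝ)⁻¹ • v) k
    have hyk : |y k - 1 / 2| < 1 / 4 :=
      hpk ▸ (PiLp.dist_apply_le y p k).trans_lt (hyp.trans_le (min_le_right _ _))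
    obtain ⟨m', hm'⟩ := FlatTorus.mk_eq_mk_iff.1 hwy k
    have := three_eighths_le_abs_sub_intCast hvk (by nlinarith) hyk
      (FlatTorus.abs_apply_le_half_of_norm_eq (hwy ▸ hwn) k) ⟨m', by rw [← hm']; ring⟩ m
    refine le_trans ?_ hm
    simpa [div_eq_inv_mul] using this
  have hnear : dist (σ' (0, y)) (σ' (0, p)) < 1 / 8 := by
    refine hcont _ hyD ?_
    rw [Prod.dist_eq, dist_self, max_eq_right dist_nonneg, dist_eq_norm, ← QuotientAddGroup.mk_sub]
    exact QuotientAddGroup.norm_mk_le_norm.trans_lt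
      ((dist_eq_norm y p).symm.trans_lt (hyp.trans_le (min_le_left _ _)))
  rw [hw, hv] at hfar
  linarith [ContinuousMap.dist_apply_le_dist (f := σ' (0, y)) (g := σ' (0, p)) unitInterval.half]

section Covering

variable {ι : Type*} [DecidableEq ι] {n : ℕ}

def AvoidsNearSlice (F : ι → Set (EuclideanSpace ℝ (Fin n))) (J : Finset ι) (k : ℕ)
    (p : EuclideanSpace ℝ (Fin n)) (ρ : ℝ) : Prop :=
  ∀ y ∈ ball p ρ, (∀ i : Fin n, (i : ℕ) < k → y i = p i) → ∀ j ∈ J, y ∉ F j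

theorem exists_avoidsNearSlice_succ {F : ι → Set (EuclideanSpace ℝ (Fin n))} {a : ℝ}
    (hF : ∀ j, ∀ p ∈ F j, ∀ k, p k = a → MissesOneSideNear (F j) p k a)
    {k : ℕ} (hk : k < n) {J : Finset ι} {p : EuclideanSpace ℝ (Fin n)} {ρ : ℝ} (hρ : 0 < ρ)
    (hpa : ∀ i : Fin n, k ≤ i → p i = a) (hp : AvoidsNearSlice F J k p ρ) {j₀ : ι}
    (hj₀ : p ∈ F j₀) :
    ∃ p' ρ', 0 < ρ' ∧ (∀ i : Fin n, k + 1 ≤ i → p' i = a) ∧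
      AvoidsNearSlice F (insert j₀ J) (k + 1) p' ρ' := by
  set κ : Fin n := ⟨k, hk⟩
  obtain ⟨δ, hδ, s, hs, hside⟩ := hF j₀ p hj₀ κ (hpa κ le_rfl)
  set ε := min ρ δ / 2
  have hε : 0 < ε := by positivity
  set p' := p + EuclideanSpace.single κ (s * ε)
  have hp'_apply : ∀ i, i ≠ κ → p' i = p i := fun i hi => by simp [p', hi]
  have hp'κ : p' κ = a + s * ε := by simp [p', hpa κ le_rfl]
  refine ⟨p', ε, hε, fun i hi => (hp'_apply i (Fin.ne_of_gt hi)).trans (hpa i (by omega)), ?_⟩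
  intro y hy hyslice j hj
  have hp'p : dist p' p = ε := by
    rw [dist_eq_norm, add_sub_cancel_left, PiLp.norm_single, norm_mul, Real.norm_eq_abs, hs,
      one_mul, Real.norm_of_nonneg hε.le]
  have hyp : dist y p < min ρ δ := calc
    dist y p ≤ dist y p' + dist p' p := dist_triangle y p' p
    _ < ε + ε := by rw [hp'p]; exact add_lt_add_left hy ε
    _ = min ρ δ := add_halves _
  rcases Finset.mem_insert.1 hj with rfl | hjJ
  · refine hside y (hyp.trans_le (min_le_right _ _)) ?_
    rw [hyslice κ (Nat.lt_succ_self k), hp'κ, add_sub_cancel_left, ← mul_assoc, ← sq,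
      ← sq_abs, hs, one_pow, one_mul]
    exact hε
  · refine hp y (hyp.trans_le (min_le_left _ _)) (fun i hi => ?_) j hjJ
    rw [hyslice i (by omega), hp'_apply i (Fin.ne_of_lt hi)]

theorem EuclideanSpace.exists_forall_notMem_of_missesOneSideNear [Fintype ι]
    (hι : Fintype.card ι ≤ n) {F : ι → Set (EuclideanSpace ℝ (Fin n))} (a : ℝ)
    (hF : ∀ j, ∀ p ∈ F j, ∀ k, p k = a → MissesOneSideNear (F j) p k a) :
    ∃ y, ∀ j, y ∉ F j := by
  by_contra! hcover
  have key : ∀ k ≤ Fintype.card ι, ∃ p ρ, ∃ J : Finset ι, 0 < ρ ∧ J.card = k ∧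
      (∀ i : Fin n, k ≤ i → p i = a) ∧ AvoidsNearSlice F J k p ρ := by
    intro k hk
    induction k with
    | zero =>
      exact ⟨WithLp.toLp 2 fun _ => a, 1, ∅, one_pos, rfl, fun _ _ => rfl,
        fun _ _ _ j hj => absurd hj (Finset.notMem_empty j)⟩
    | succ k ih =>
      obtain ⟨p, ρ, J, hρ, hJ, hpa, hp⟩ := ih (by omega)
      obtain ⟨j₀, hj₀⟩ := hcover p
      have hj₀J : j₀ ∉ J := fun hj => hp p (mem_ball_self hρ) (fun _ _ => rfl) j₀ hj hj₀
      obtain ⟨p', ρ', hρ', hpa', hp'⟩ := exists_avoidsNearSlice_succ hF (by omega) hρ hpa hp hj₀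
      exact ⟨p', ρ', insert j₀ J, hρ', by rw [Finset.card_insert_of_notMem hj₀J, hJ], hpa', hp'⟩
  obtain ⟨p, ρ, J, hρ, hJ, -, hp⟩ := key _ le_rfl
  obtain ⟨j, hj⟩ := hcover p
  exact hp p (mem_ball_self hρ) (fun _ _ => rfl) j
    (Finset.eq_univ_of_card J hJ ▸ Finset.mem_univ j) hj

end Covering

theorem flatTorus_no_partition_into_n_gmpr_sets_general (n : ℕ) :
    ¬ ∃ E : Fin n → Set (FlatTorus n × FlatTorus n),
        (∀ z : FlatTorus n × FlatTorus n, ∃! j, z ∈ E j) ∧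
        (∀ j, LocallyCompactSpace (E j)) ∧
        (∀ j, ∃ σ', IsGMPROn (E j) σ') := by
  rintro ⟨E, hpart, -, hgmpr⟩
  choose σ' hσ' using hgmpr
  obtain ⟨y, hy⟩ := EuclideanSpace.exists_forall_notMem_of_missesOneSideNear
    (Fintype.card_fin n).le (F := fun j => {y | (0, (y : FlatTorus n)) ∈ E j}) (1 / 2)
    fun j _ hp _ hpk => (hσ' j).missesOneSideNear hp hpk
  obtain ⟨j, hj, -⟩ := hpart (0, y)
  exact hy j hj

/-- **The geodesic complexity of the flat `n`-torus is at least `n`.**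
`Tⁿ × Tⁿ` cannot be partitioned into `n` locally compact subsets each of which
admits a geodesic motion planning rule. -/
theorem flatTorus_no_partition_into_n_gmpr_sets (n : ℕ) (hn : 1 ≤ n) :
    ¬ ∃ E : Fin n → Set (FlatTorus n × FlatTorus n),
        (∀ z : FlatTorus n × FlatTorus n, ∃! j, z ∈ E j) ∧
        (∀ j, LocallyCompactSpace (E j)) ∧
        (∀ j, ∃ σ', IsGMPROn (E j) σ') :=
  flatTorus_no_partition_into_n_gmpr_sets_general n
end

section
/- Let p, q₁, q₂ ∈ ℝ² be such that the segments [p,q₁] and [p,q₂] intersect only in the point p. Let λ ∈ (0,1) and set q = λq₁ + (1−λ)q₂. Then for all t₁, t₂ ∈ [0,1], the segment joining x₁ = p + t₁(q₁ − p) and x₂ = p + t₂(q₂ − p) intersects the segment [p,q]. -/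
/-- **Segments between two rays through `p` meet the intermediate segment.**
If `[p,q₁]` and `[p,q₂]` meet only at `p`, `λ ∈ (0,1)` and
`q = λ q₁ + (1−λ) q₂`, then for all `t₁, t₂ ∈ [0,1]` the segment joining
`x₁ = p + t₁ (q₁ − p)` and `x₂ = p + t₂ (q₂ − p)` intersects `[p,q]`. -/
theorem segment_between_rays_meets_convex_combination
    (p q₁ q₂ : EuclideanSpace ℝ (Fin 2))
    (h : segment ℝ p q₁ ∩ segment ℝ p q₂ = {p})
    (lam : ℝ) (hlam : lam ∈ Set.Ioo (0 : ℝ) 1)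
    (q : EuclideanSpace ℝ (Fin 2)) (hq : q = lam • q₁ + (1 - lam) • q₂)
    (t₁ t₂ : ℝ) (ht₁ : t₁ ∈ Set.Icc (0 : ℝ) 1) (ht₂ : t₂ ∈ Set.Icc (0 : ℝ) 1) :
    (segment ℝ (p + t₁ • (q₁ - p)) (p + t₂ • (q₂ - p)) ∩ segment ℝ p q).Nonempty := by
  obtain ⟨hl0, hl1⟩ := hlam
  obtain ⟨ht10, ht11⟩ := ht₁
  obtain ⟨ht20, ht21⟩ := ht₂
  by_cases hD : t₁ * (1 - lam) + t₂ * lam = 0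
  · have ht1 : t₁ = 0 := by nlinarith
    refine ⟨p, ?_, left_mem_segment ℝ p q⟩
    rw [ht1]
    simpa using left_mem_segment ℝ p (p + t₂ • (q₂ - p))
  · have hD' : 0 < t₁ * (1 - lam) + t₂ * lam :=
      lt_of_le_of_ne (by nlinarith) (Ne.symm hD)
    set D := t₁ * (1 - lam) + t₂ * lam with hDdef
    have hr1 : t₁ * t₂ / D ≤ 1 := by
      rw [div_le_one hD']
      nlinarith [mul_le_of_le_one_right ht10 ht21, mul_le_of_le_one_left ht20 ht11]
    refine ⟨(t₂ * lam / D) • (p + t₁ • (q₁ - p)) + (t₁ * (1 - lam) / D) • (p + t₂ • (q₂ - p)),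
      ⟨t₂ * lam / D, t₁ * (1 - lam) / D,
        div_nonneg (by positivity) hD'.le,
        div_nonneg (by nlinarith) hD'.le,
        by field_simp; ring, rfl⟩,
      ⟨1 - t₁ * t₂ / D, t₁ * t₂ / D,
        by linarith,
        div_nonneg (by positivity) hD'.le,
        by ring, ?_⟩⟩
    rw [hq]
    match_scalars <;> field_simp <;> ring
end

section
/- Let Tⁿ be the flat n-torus. Every geodesic γ : [0,1] → Tⁿ projects in each coordinate to a geodesic of the circle: for each k ∈ {1, …, n}, the path π_k ∘ γ : [0,1] → ℝ/ℤ is a geodesic of ℝ/ℤ with its quotient metric. -/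
/-- Projection of the flat torus onto its `k`-th circle factor `ℝ/ℤ`
(realized as `AddCircle (1 : ℝ)` with its quotient metric). -/
noncomputable def torusProj (n : ℕ) (k : Fin n) : FlatTorus n →+ AddCircle (1 : ℝ) :=
  QuotientAddGroup.lift (intLattice n)
    ((QuotientAddGroup.mk' (AddSubgroup.zmultiples (1 : ℝ))).comp
      { toFun := fun x : EuclideanSpace ℝ (Fin n) => x k
        map_zero' := rfl
        map_add' := fun _ _ => rfl })
    (by
      intro x hx
      obtain ⟨m, hm⟩ := hx k
      show QuotientAddGroup.mk' (AddSubgroup.zmultiples (1 : ℝ)) (x k) = 0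
      rw [QuotientAddGroup.mk'_apply, QuotientAddGroup.eq_zero_iff]
      exact ⟨m, by simp [hm]⟩)


/-!
The flat metric is the Euclidean combination of the circle metrics of the coordinates,
`d(x, y) = ‖(d_j(x, y))_j‖₂`. Along a geodesic of speed `c`, the vector `D(s, t)` of coordinate
distances has length `c |t - s|`, and the triangle inequality in each circle gives
`D(s, t) ≤ D(s, u) + D(u, t)` coordinatewise for `s ≤ u ≤ t`. Both sides are nonnegative
vectors of the same length `c (t - s)`, so they are equal. Hence `f u = D(0, u)` satisfies
`f 0 = 0` and `‖f u - f u'‖ = c |u - u'|`; in the strictly convex space `ℝⁿ` this forces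
`f u = u • f 1`, so `D(s, t) = (t - s) • f 1` and every coordinate moves at constant speed.
-/

section EuclideanNorm

variable {ι : Type*} [Fintype ι]

theorem EuclideanSpace.norm_le_norm_of_forall_abs_le {x y : EuclideanSpace ℝ ι}
    (h : ∀ i, |x i| ≤ |y i|) : ‖x‖ ≤ ‖y‖ := by
  simp only [EuclideanSpace.norm_eq, Real.norm_eq_abs]
  exact Real.sqrt_le_sqrt (Finset.sum_le_sum fun i _ => pow_le_pow_left₀ (abs_nonneg _) (h i) 2)

theorem EuclideanSpace.eq_of_forall_le_of_norm_le {x y : EuclideanSpace ℝ ι}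
    (hx : ∀ i, 0 ≤ x i) (hxy : ∀ i, x i ≤ y i) (h : ‖y‖ ≤ ‖x‖) : x = y := by
  have hsq : ∀ i ∈ Finset.univ, x i ^ 2 ≤ y i ^ 2 := fun i _ =>
    pow_le_pow_left₀ (hx i) (hxy i) 2
  have hsum : ∑ i, x i ^ 2 = ∑ i, y i ^ 2 := by
    refine le_antisymm (Finset.sum_le_sum hsq) ?_
    simpa only [EuclideanSpace.norm_sq_eq, Real.norm_eq_abs, sq_abs] using
      pow_le_pow_left₀ (norm_nonneg _) h 2
  ext i
  exact (pow_left_inj₀ (hx i) ((hx i).trans (hxy i)) two_ne_zero).1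
    ((Finset.sum_eq_sum_iff_of_le hsq).1 hsum i (Finset.mem_univ i))

end EuclideanNorm

section CoordDist

variable {X ι : Type*} {Y : ι → Type*} [PseudoMetricSpace X] [∀ j, PseudoMetricSpace (Y j)]
  [Fintype ι] {p : ∀ j, X → Y j}

def coordDist (p : ∀ j, X → Y j) (x y : X) : EuclideanSpace ℝ ι :=
  WithLp.toLp 2 fun j => dist (p j x) (p j y)

theorem lipschitzWith_one_of_dist_eq_norm_coordDist
    (hp : ∀ x y, dist x y = ‖coordDist p x y‖) (j : ι) : LipschitzWith 1 (p j) :=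
  LipschitzWith.of_dist_le_mul fun x y => by
    simpa [hp x y, coordDist] using PiLp.norm_apply_le (coordDist p x y) j

section Geodesic

variable {γ : unitInterval → X} {c : ℝ}

theorem coordDist_add_coordDist_of_le (hp : ∀ x y, dist x y = ‖coordDist p x y‖)
    (hγ : ∀ s t, dist (γ s) (γ t) = c * |(s : ℝ) - t|) {s u t : unitInterval}
    (hsu : s ≤ u) (hut : u ≤ t) :
    coordDist p (γ s) (γ u) + coordDist p (γ u) (γ t) = coordDist p (γ s) (γ t) := by
  have hsu : (s : ℝ) ≤ u := hsu
  have hut : (u : ℝ) ≤ t := hut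
  symm
  apply EuclideanSpace.eq_of_forall_le_of_norm_le (fun j => dist_nonneg)
    (fun j => dist_triangle _ (p j (γ u)) _)
  calc ‖coordDist p (γ s) (γ u) + coordDist p (γ u) (γ t)‖
      ≤ ‖coordDist p (γ s) (γ u)‖ + ‖coordDist p (γ u) (γ t)‖ := norm_add_le _ _
    _ = c * |(s : ℝ) - u| + c * |(u : ℝ) - t| := by rw [← hp, ← hp, hγ, hγ]
    _ = c * |(s : ℝ) - t| := by
      rw [abs_of_nonpos (by linarith), abs_of_nonpos (by linarith),
        abs_of_nonpos (by linarith)]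
      ring
    _ = ‖coordDist p (γ s) (γ t)‖ := by rw [← hp, hγ]

theorem coordDist_zero_eq_smul (hp : ∀ x y, dist x y = ‖coordDist p x y‖)
    (hγ : ∀ s t, dist (γ s) (γ t) = c * |(s : ℝ) - t|) (u : unitInterval) :
    coordDist p (γ 0) (γ u) = (u : ℝ) • coordDist p (γ 0) (γ 1) := by
  have hnorm : ∀ v : unitInterval, ‖coordDist p (γ 0) (γ v)‖ = c * v := fun v => by
    rw [← hp, hγ, Set.Icc.coe_zero, zero_sub, abs_neg, abs_of_nonneg v.2.1]
  have hsub : coordDist p (γ 0) (γ 1) - coordDist p (γ 0) (γ u) = coordDist p (γ u) (γ 1) :=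
    sub_eq_of_eq_add'
      (coordDist_add_coordDist_of_le hp hγ unitInterval.nonneg' unitInterval.le_one').symm
  simpa [AffineMap.lineMap_apply_module] using
    eq_lineMap_of_dist_eq_mul_of_dist_eq_mul (x := (0 : EuclideanSpace ℝ ι)) (r := (u : ℝ))
      (by rw [dist_zero_left, dist_zero_left, hnorm, hnorm, Set.Icc.coe_one]; ring)
      (by
        rw [dist_eq_norm', hsub, dist_zero_left, hnorm, ← hp, hγ, Set.Icc.coe_one,
          abs_of_nonpos (by linarith [u.2.2])]
        ring)

theorem coordDist_eq_smul_of_le (hp : ∀ x y, dist x y = ‖coordDist p x y‖)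
    (hγ : ∀ s t, dist (γ s) (γ t) = c * |(s : ℝ) - t|) {s t : unitInterval} (hst : s ≤ t) :
    coordDist p (γ s) (γ t) = ((t : ℝ) - s) • coordDist p (γ 0) (γ 1) := by
  rw [eq_sub_of_add_eq' (coordDist_add_coordDist_of_le hp hγ unitInterval.nonneg' hst),
    coordDist_zero_eq_smul hp hγ t, coordDist_zero_eq_smul hp hγ s, sub_smul]

end Geodesic

theorem IsGeodesic.comp_of_dist_eq_norm_coordDist (hp : ∀ x y, dist x y = ‖coordDist p x y‖)
    {γ : C(unitInterval, X)} (hγ : IsGeodesic γ) (j : ι) :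
    IsGeodesic ((⟨p j, (lipschitzWith_one_of_dist_eq_norm_coordDist hp j).continuous⟩ :
      C(X, Y j)).comp γ) := by
  obtain ⟨c, hc⟩ := hγ
  refine ⟨coordDist p (γ 0) (γ 1) j, fun s t => ?_⟩
  wlog hst : s ≤ t generalizing s t
  · rw [dist_comm, abs_sub_comm (s : ℝ)]
    exact this t s (le_of_not_ge hst)
  change coordDist p (γ s) (γ t) j = _
  rw [coordDist_eq_smul_of_le hp hc hst, PiLp.smul_apply, smul_eq_mul,
    abs_of_nonpos (sub_nonpos.2 (show (s : ℝ) ≤ t from hst)), neg_sub, mul_comm]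

end CoordDist

section FlatTorus

variable {n : ℕ}

@[simp]
theorem torusProj_mk (k : Fin n) (z : EuclideanSpace ℝ (Fin n)) :
    torusProj n k z = (z k : AddCircle (1 : ℝ)) :=
  rfl

theorem FlatTorus.norm_mk (z : EuclideanSpace ℝ (Fin n)) :
    ‖(z : FlatTorus n)‖ = ‖WithLp.toLp 2 fun j => ‖(z j : AddCircle (1 : ℝ))‖‖ := by
  apply le_antisymm
  · let w : EuclideanSpace ℝ (Fin n) := WithLp.toLp 2 fun j => z j - round (z j)
    have hw : (w : FlatTorus n) = z := by
      rw [QuotientAddGroup.eq_iff_sub_mem]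
      exact fun j => ⟨-round (z j), by simp [w]⟩
    calc ‖(z : FlatTorus n)‖ = ‖(w : FlatTorus n)‖ := by rw [hw]
      _ ≤ ‖w‖ := QuotientAddGroup.norm_mk_le_norm
      _ = _ := by simp [w, EuclideanSpace.norm_eq, UnitAddCircle.norm_eq]
  · refine QuotientAddGroup.le_norm_iff.2 fun w hw => ?_
    refine EuclideanSpace.norm_le_norm_of_forall_abs_le fun j => ?_
    have hj : (w j : AddCircle (1 : ℝ)) = z j := by simpa using congrArg (torusProj n j) hw
    simpa [← hj] using QuotientAddGroup.norm_mk_le_norm (S := AddSubgroup.zmultiples (1 : ℝ))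

theorem FlatTorus.dist_eq_norm_coordDist (a b : FlatTorus n) :
    dist a b = ‖coordDist (fun j => torusProj n j) a b‖ := by
  induction a using QuotientAddGroup.induction_on
  induction b using QuotientAddGroup.induction_on
  rw [dist_eq_norm, ← QuotientAddGroup.mk_sub, FlatTorus.norm_mk]
  simp [coordDist, dist_eq_norm]

end FlatTorus

/-- **Coordinate projections of torus geodesics are circle geodesics.**
Every geodesic `γ : [0,1] → Tⁿ` of the flat `n`-torus projects, in each
coordinate `k`, to a geodesic of the circle `ℝ/ℤ`: the path `π_k ∘ γ` is a
(continuous) geodesic of `ℝ/ℤ` with its quotient metric. -/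
theorem flatTorus_geodesic_proj_isGeodesic (n : ℕ) (k : Fin n)
    (γ : C(unitInterval, FlatTorus n)) (hγ : IsGeodesic γ) :
    ∃ g : C(unitInterval, AddCircle (1 : ℝ)),
      (∀ t, g t = torusProj n k (γ t)) ∧ IsGeodesic g :=
  ⟨_, fun _ => rfl, hγ.comp_of_dist_eq_norm_coordDist FlatTorus.dist_eq_norm_coordDist k⟩
end
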